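/- arXiv:1404.1331 — 2 statements merged into one kernel-verified Lean document; each statement's English description precedes it below -/
import Mathlib

section
/- For every integer m, (1/(2π))∫₀^{2π} ln(4 sin²(t/2)) e^{imt} dt equals 0 if m = 0 and equals −1/|m| otherwise. -/
/-!
For `|r| < 1`, the Taylor series of `log (1 - z)` gives
`log ‖1 - r e^{it}‖ = -∑ rⁿ cos (n t) / n`, whose Fourier coefficients are read off termwise:
the `m`-th one is `-r^|m| / (2|m|)`. Letting `r → 1⁻` is dominated convergence, since
`|log ‖1 - r e^{it}‖| ≤ log 4 - log ‖1 - e^{it}‖` and the right side is integrable.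
Finally `4 sin² (t/2) = ‖1 - e^{it}‖²`.
-/

open MeasureTheory Real Complex Filter Topology

/-- Fourier coefficient of a 2π-periodic function on [0, 2π]. -/
noncomputable def fCoeff (φ : ℝ → ℂ) (m : ℤ) : ℂ :=
  (1 / (2 * Real.pi) : ℂ) *
    ∫ t in (0:ℝ)..(2 * Real.pi), φ t * Complex.exp (-(Complex.I) * m * t)

open scoped Interval

theorem norm_exp_I_mul_int_mul (m : ℤ) (t : ℝ) : ‖Complex.exp (I * m * t)‖ = 1 := by
  rw [Complex.norm_exp]; simp

theorem integral_exp_I_mul_int_mul (k : ℤ) :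
    ∫ t in (0:ℝ)..2 * π, Complex.exp (I * k * t) = if k = 0 then (2 * π : ℂ) else 0 := by
  split_ifs with hk
  · simp [hk]
  · have hc : I * k ≠ 0 := by simp [hk]
    have hperiod : Complex.exp (I * k * (2 * π : ℝ)) = 1 := by
      rw [← exp_int_mul_two_pi_mul_I k]; push_cast; ring_nf
    rw [integral_exp_mul_complex hc, hperiod]
    simp

theorem integral_cos_nat_mul_mul_exp {n : ℕ} (hn : n ≠ 0) (m : ℤ) :
    ∫ t in (0:ℝ)..2 * π, (Real.cos (n * t) : ℂ) * Complex.exp (I * m * t)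
      = if n = m.natAbs then (π : ℂ) else 0 := by
  have hsplit : ∀ t : ℝ, (Real.cos (n * t) : ℂ) * Complex.exp (I * m * t)
      = (Complex.exp (I * ((m + n : ℤ) : ℂ) * t)
          + Complex.exp (I * ((m - n : ℤ) : ℂ) * t)) / 2 := by
    intro t
    rw [ofReal_cos, Complex.cos, div_mul_eq_mul_div, add_mul, ← Complex.exp_add, ← Complex.exp_add]
    congr 3 <;> push_cast <;> ring
  simp_rw [hsplit]
  rw [intervalIntegral.integral_div, intervalIntegral.integral_add
      (Continuous.intervalIntegrable (by fun_prop) _ _)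
      (Continuous.intervalIntegrable (by fun_prop) _ _),
    integral_exp_I_mul_int_mul, integral_exp_I_mul_int_mul]
  split_ifs <;> first | omega | ring

theorem hasSum_log_norm_one_sub {z : ℂ} (hz : ‖z‖ < 1) :
    HasSum (fun n : ℕ => -(z ^ n / n).re) (Real.log ‖1 - z‖) := by
  simpa [Complex.log_re] using (hasSum_re (hasSum_taylorSeries_neg_log hz)).neg

theorem intervalIntegrable_log_norm_one_sub_exp :
    IntervalIntegrable (fun t : ℝ => Real.log ‖1 - Complex.exp (I * t)‖) volume 0 (2 * π) := by
  have h := circleIntegrable_log_norm_sub_const (a := 1) (c := 0) 1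
  unfold CircleIntegrable at h
  convert h using 3 with t
  simp [circleMap, norm_sub_rev, mul_comm]

theorem ae_exp_I_mul_ne_one : ∀ᵐ t : ℝ, t ∈ Ι 0 (2 * π) → Complex.exp (I * t) ≠ 1 := by
  filter_upwards [compl_mem_ae_iff.2 (measure_singleton (2 * π))] with t ht hmem
  rw [Set.uIoc_of_le (by positivity)] at hmem
  rw [← sub_ne_zero, ← norm_ne_zero_iff, norm_exp_I_mul_ofReal_sub_one]
  have : 0 < Real.sin (t / 2) := Real.sin_pos_of_pos_of_lt_pi (by linarith [hmem.1])
    (by linarith [lt_of_le_of_ne hmem.2 ht])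
  simp [this.ne']

theorem re_pow_ofReal_mul_exp_I_mul_div (r t : ℝ) (n : ℕ) :
    (((r : ℂ) * Complex.exp (I * t)) ^ n / n).re = r ^ n * Real.cos (n * t) / n := by
  rw [mul_pow, ← Complex.exp_nat_mul, ← ofReal_pow, Complex.div_natCast_re, re_ofReal_mul,
    show (n : ℂ) * (I * t) = ((n * t : ℝ) : ℂ) * I by push_cast; ring, exp_ofReal_mul_I_re]

theorem abs_pow_mul_cos_div_le (r x : ℝ) (n : ℕ) : |r ^ n * Real.cos x / n| ≤ |r| ^ n := by
  rcases n.eq_zero_or_pos with rfl | hn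
  · simp
  rw [abs_div, abs_mul, abs_pow, Nat.abs_cast]
  calc |r| ^ n * |Real.cos x| / n ≤ |r| ^ n * 1 / 1 := by
        gcongr
        · exact abs_cos_le_one x
        · exact_mod_cast hn
    _ = |r| ^ n := by ring

-- For `m = 0` the right side is `0` through the convention `x / 0 = 0`.
theorem integral_log_norm_one_sub_mul_exp_mul_exp {r : ℝ} (hr : |r| < 1) (m : ℤ) :
    ∫ t in (0:ℝ)..2 * π, (Real.log ‖1 - r * Complex.exp (I * t)‖ : ℂ) * Complex.exp (I * m * t)
      = -(r ^ m.natAbs / m.natAbs * π) := by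
  set F : ℕ → ℝ → ℂ := fun n t =>
    ((-(r ^ n * Real.cos (n * t) / n) : ℝ) : ℂ) * Complex.exp (I * m * t)
  have hintegral : ∀ n, ∫ t in (0:ℝ)..2 * π, F n t
      = if n = m.natAbs then -(r ^ m.natAbs / m.natAbs * π : ℂ) else 0 := by
    intro n
    rcases eq_or_ne n 0 with rfl | hn
    · split_ifs with h
      · rw [← h]; simp [F]
      · simp [F]
    have hFn : F n = fun t =>
        (-(r ^ n / n) : ℂ) * ((Real.cos (n * t) : ℂ) * Complex.exp (I * m * t)) := by
      ext t; simp only [F]; push_cast; ring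
    rw [hFn, intervalIntegral.integral_const_mul, integral_cos_nat_mul_mul_exp hn]
    split_ifs with h
    · subst h; ring
    · simp
  have hbound : ∀ n t, ‖F n t‖ ≤ |r| ^ n := fun n t => by
    simp only [F, norm_mul, norm_exp_I_mul_int_mul, mul_one, norm_real, norm_neg, Real.norm_eq_abs]
    exact abs_pow_mul_cos_div_le r _ n
  have hseries : ∀ t : ℝ, HasSum (fun n => F n t)
      ((Real.log ‖1 - r * Complex.exp (I * t)‖ : ℂ) * Complex.exp (I * m * t)) := fun t => by
    have hz : ‖(r : ℂ) * Complex.exp (I * t)‖ < 1 := by simpa [mul_comm I] using hr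
    have := ((hasSum_log_norm_one_sub hz).mapL ofRealCLM).mul_right (Complex.exp (I * m * t))
    simpa only [F, ofRealCLM_apply, re_pow_ofReal_mul_exp_I_mul_div] using this
  have hsum := intervalIntegral.hasSum_integral_of_dominated_convergence
    (μ := volume) (a := 0) (b := 2 * π) (fun n _ => |r| ^ n)
    (fun n => (by fun_prop : Continuous (F n)).aestronglyMeasurable)
    (fun n => ae_of_all _ fun t _ => hbound n t)
    (ae_of_all _ fun _ _ => summable_geometric_of_lt_one (abs_nonneg r) hr)
    intervalIntegrable_const (ae_of_all _ fun t _ => hseries t)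
  rw [funext hintegral] at hsum
  exact hsum.unique (hasSum_ite_eq _ _)

theorem abs_log_norm_one_sub_mul_le {w : ℂ} (hw : ‖w‖ = 1) (hw1 : w ≠ 1) {r : ℝ} (hr0 : 0 ≤ r)
    (hr1 : r ≤ 1) : |Real.log ‖1 - r * w‖| ≤ Real.log 4 - Real.log ‖1 - w‖ := by
  have hrw : ‖(r : ℂ) * w‖ = r := by simp [hw, abs_of_nonneg hr0]
  have hupper : ‖1 - r * w‖ ≤ 2 := by
    calc ‖1 - r * w‖ ≤ ‖(1 : ℂ)‖ + ‖(r : ℂ) * w‖ := norm_sub_le _ _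
      _ ≤ 2 := by rw [hrw]; norm_num; linarith
  have hw_upper : ‖1 - w‖ ≤ 2 := by
    calc ‖1 - w‖ ≤ ‖(1 : ℂ)‖ + ‖w‖ := norm_sub_le _ _
      _ = 2 := by rw [hw]; norm_num
  -- Moving `r * w` to `w` costs `1 - r`, which is itself at most `‖1 - r * w‖`.
  have hlower : ‖1 - w‖ ≤ 2 * ‖1 - r * w‖ := by
    have h1 : 1 - r ≤ ‖1 - r * w‖ := by
      simpa only [norm_one, hrw] using norm_sub_norm_le (1 : ℂ) (r * w)
    have h2 : ‖1 - w‖ ≤ ‖1 - r * w‖ + (1 - r) := by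
      calc ‖1 - w‖ = ‖(1 - r * w) - (1 - r) * w‖ := by ring_nf
        _ ≤ ‖1 - r * w‖ + ‖((1 - r : ℝ) : ℂ) * w‖ := by push_cast; exact norm_sub_le _ _
        _ = ‖1 - r * w‖ + (1 - r) := by
          rw [norm_mul, hw, mul_one, norm_real, Real.norm_of_nonneg (sub_nonneg.2 hr1)]
    linarith
  have hpos : 0 < ‖1 - w‖ := norm_pos_iff.2 (sub_ne_zero.2 hw1.symm)
  have hlog4 : Real.log 4 = 2 * Real.log 2 := by
    rw [show (4 : ℝ) = 2 ^ 2 by norm_num, Real.log_pow]; norm_num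
  have h0 := Real.log_nonneg one_le_two
  have h1 := Real.log_le_log (by linarith) hupper
  have h2 := Real.log_le_log hpos hw_upper
  have h3 := Real.log_le_log hpos hlower
  rw [Real.log_mul two_ne_zero (by linarith)] at h3
  rw [abs_le]
  constructor <;> linarith

theorem continuousAt_log_norm_one_sub_mul {w : ℂ} (hw : w ≠ 1) :
    ContinuousAt (fun r : ℝ => Real.log ‖1 - r * w‖) 1 :=
  ContinuousAt.log (by fun_prop) (by simpa [sub_eq_zero] using hw.symm)

theorem integral_log_norm_one_sub_exp_mul_exp (m : ℤ) :
    ∫ t in (0:ℝ)..2 * π, (Real.log ‖1 - Complex.exp (I * t)‖ : ℂ) * Complex.exp (I * m * t)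
      = -(1 / m.natAbs * π) := by
  set F : ℝ → ℝ → ℂ := fun r t =>
    (Real.log ‖1 - r * Complex.exp (I * t)‖ : ℂ) * Complex.exp (I * m * t)
  have hnear : ∀ᶠ r in 𝓝[<] (1:ℝ), r ∈ Set.Ioo 0 1 := Ioo_mem_nhdsLT one_pos
  have hmeas : ∀ r, AEStronglyMeasurable (F r) (volume.restrict (Ι 0 (2 * π))) := fun r =>
    (by fun_prop : Measurable (F r)).aestronglyMeasurable
  have hbound : ∀ᶠ r in 𝓝[<] (1:ℝ), ∀ᵐ t : ℝ, t ∈ Ι 0 (2 * π) →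
      ‖F r t‖ ≤ Real.log 4 - Real.log ‖1 - Complex.exp (I * t)‖ := by
    filter_upwards [hnear] with r hr
    filter_upwards [ae_exp_I_mul_ne_one] with t ht hmem
    simp only [F, norm_mul, norm_exp_I_mul_int_mul, mul_one, norm_real, Real.norm_eq_abs]
    exact abs_log_norm_one_sub_mul_le (norm_exp_I_mul_ofReal t) (ht hmem) hr.1.le hr.2.le
  have hlim : ∀ᵐ t : ℝ, t ∈ Ι 0 (2 * π) → Tendsto (fun r => F r t) (𝓝[<] 1)
      (𝓝 ((Real.log ‖1 - Complex.exp (I * t)‖ : ℂ) * Complex.exp (I * m * t))) := by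
    filter_upwards [ae_exp_I_mul_ne_one] with t ht hmem
    have hcont := ((continuous_ofReal.continuousAt.comp
      (continuousAt_log_norm_one_sub_mul (ht hmem))).mul_const (Complex.exp (I * m * t)))
    simpa [F] using hcont.tendsto.mono_left nhdsWithin_le_nhds
  have hDCT := intervalIntegral.tendsto_integral_filter_of_dominated_convergence _
    (Eventually.of_forall hmeas) hbound
    (intervalIntegrable_const.sub intervalIntegrable_log_norm_one_sub_exp) hlim
  have hvalues : Tendsto (fun r : ℝ => -((r : ℂ) ^ m.natAbs / m.natAbs * π)) (𝓝[<] 1)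
      (𝓝 (-(1 / m.natAbs * π))) := by
    have : Continuous (fun r : ℝ => -((r : ℂ) ^ m.natAbs / m.natAbs * π)) := by fun_prop
    simpa using this.continuousAt.tendsto.mono_left (nhdsWithin_le_nhds (a := (1:ℝ)))
  refine tendsto_nhds_unique (hDCT.congr' ?_) hvalues
  filter_upwards [hnear] with r hr
  exact integral_log_norm_one_sub_mul_exp_mul_exp (abs_lt.2 ⟨by linarith [hr.1], hr.2⟩) m

theorem log_four_mul_sin_half_sq (t : ℝ) :
    Real.log (4 * Real.sin (t / 2) ^ 2) = 2 * Real.log ‖1 - Complex.exp (I * t)‖ := by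
  rw [norm_sub_rev, norm_exp_I_mul_ofReal_sub_one, Real.norm_eq_abs, Real.log_abs,
    show 4 * Real.sin (t / 2) ^ 2 = (2 * Real.sin (t / 2)) ^ 2 by ring, Real.log_pow]
  norm_num

theorem stmt0 (m : ℤ) :
    (1 / (2 * Real.pi) : ℂ) *
      ∫ t in (0:ℝ)..(2 * Real.pi),
        (Real.log (4 * Real.sin (t / 2) ^ 2) : ℂ) * Complex.exp (Complex.I * m * t)
    = if m = 0 then 0 else -1 / ((|m| : ℤ) : ℂ) := by
  simp_rw [log_four_mul_sin_half_sq]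
  push_cast
  simp_rw [mul_assoc (2 : ℂ)]
  rw [intervalIntegral.integral_const_mul, integral_log_norm_one_sub_exp_mul_exp]
  split_ifs with hm
  · simp [hm]
  · rw [← Nat.cast_natAbs]
    field_simp
end

section
/- For every integer m, I(m) := (1/(2π))∫₀^{2π} sin²(t/2) ln(4 sin²(t/2)) e^{imt} dt equals 1/2 if m = 0, equals −3/8 if m = ±1, and equals (1/4)(1/|m+1| + 1/|m−1| − 2/|m|) otherwise. -/
open MeasureTheory Real Complex Filter Topology

/-!
For `|r| < 1`, expanding `-log (1 - z)` at `z = r e^{it}` gives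
`log (1 - 2 r cos t + r²) = -2 ∑_{k ≥ 1} r^k cos (k t) / k`, so this function has `n`-th Fourier
coefficient `-r^|n| / |n|` (and `0` for `n = 0`). Since `sin² (t/2) = (1 - cos t) / 2`, multiplying
by it mixes the coefficients at `n` and `n ± 1`. At `r = 1` the function becomes
`log (4 sin² (t/2))`, and `sin² (t/2) log (1 - 2 r cos t + r²)` stays bounded by `3` for
`0 ≤ r ≤ 1`, so dominated convergence lets `r → 1⁻`.
-/

noncomputable def expCoeff (f : ℝ → ℝ) (n : ℤ) : ℂ :=
  ∫ t in (0:ℝ)..2 * π, (f t : ℂ) * Complex.exp (I * n * t)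

lemma norm_exp_I_int_mul (n : ℤ) (t : ℝ) : ‖Complex.exp (I * n * t)‖ = 1 := by
  simp [Complex.norm_exp]

lemma expCoeff_const_mul (c : ℝ) (f : ℝ → ℝ) (n : ℤ) :
    expCoeff (fun t => c * f t) n = c * expCoeff f n := by
  simp only [expCoeff, ofReal_mul, mul_assoc, intervalIntegral.integral_const_mul]

lemma expCoeff_one (n : ℤ) : expCoeff 1 n = if n = 0 then 2 * π else 0 := by
  split_ifs with hn
  · simp [expCoeff, hn]
  have hc : I * n ≠ 0 := by simp [hn]
  have hperiod : Complex.exp (I * n * (2 * π : ℝ)) = 1 := by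
    rw [← Complex.exp_int_mul_two_pi_mul_I n]; push_cast; ring_nf
  simp only [expCoeff, Pi.one_apply, ofReal_one, one_mul]
  rw [integral_exp_mul_complex hc, hperiod]
  simp

lemma intervalIntegrable_ofReal_mul_exp {g : ℝ → ℝ}
    (hg : IntervalIntegrable g volume 0 (2 * π)) (n : ℤ) :
    IntervalIntegrable (fun t : ℝ => (g t : ℂ) * Complex.exp (I * n * t)) volume 0 (2 * π) :=
  IntervalIntegrable.mul_continuousOn ⟨hg.1.ofReal, hg.2.ofReal⟩ (by fun_prop)

lemma expCoeff_sub {f g : ℝ → ℝ} (hf : IntervalIntegrable f volume 0 (2 * π))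
    (hg : IntervalIntegrable g volume 0 (2 * π)) (n : ℤ) :
    expCoeff (fun t => f t - g t) n = expCoeff f n - expCoeff g n := by
  simp only [expCoeff, ofReal_sub, sub_mul]
  exact intervalIntegral.integral_sub (intervalIntegrable_ofReal_mul_exp hf n)
    (intervalIntegrable_ofReal_mul_exp hg n)

lemma ofReal_cos_mul_exp (a : ℝ) (z : ℂ) :
    (Real.cos a : ℂ) * Complex.exp z = (Complex.exp (z + a * I) + Complex.exp (z - a * I)) / 2 := by
  rw [ofReal_cos, Complex.cos, sub_eq_add_neg, Complex.exp_add, Complex.exp_add, neg_mul]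
  ring

lemma expCoeff_mul_cos {g : ℝ → ℝ} (hg : IntervalIntegrable g volume 0 (2 * π)) (k n : ℤ) :
    expCoeff (fun t => g t * Real.cos (k * t)) n
      = (expCoeff g (n + k) + expCoeff g (n - k)) / 2 := by
  rw [expCoeff, expCoeff, expCoeff, ← intervalIntegral.integral_add
    (intervalIntegrable_ofReal_mul_exp hg _) (intervalIntegrable_ofReal_mul_exp hg _),
    ← intervalIntegral.integral_div]
  congr 1 with t
  rw [ofReal_mul, mul_assoc, ofReal_cos_mul_exp]
  push_cast
  ring_nf

lemma expCoeff_cos_nat_mul {k : ℕ} (hk : k ≠ 0) (n : ℤ) :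
    expCoeff (fun t => Real.cos (k * t)) n = if n.natAbs = k then (π : ℂ) else 0 := by
  have h := expCoeff_mul_cos (g := 1) intervalIntegrable_const k n
  simp only [Pi.one_apply, one_mul, Int.cast_natCast, expCoeff_one] at h
  rw [h]
  split_ifs <;> first | omega | (push_cast; ring)

lemma sin_sq_half (t : ℝ) : Real.sin (t / 2) ^ 2 = (1 - Real.cos t) / 2 := by
  rw [Real.sin_sq_eq_half_sub, mul_div_cancel₀ t two_ne_zero]; ring

lemma expCoeff_sin_sq_half_mul {g : ℝ → ℝ} (hg : IntervalIntegrable g volume 0 (2 * π)) (n : ℤ) :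
    expCoeff (fun t => Real.sin (t / 2) ^ 2 * g t) n
      = expCoeff g n / 2 - (expCoeff g (n + 1) + expCoeff g (n - 1)) / 4 := by
  have hcos := expCoeff_mul_cos hg 1 n
  simp only [Int.cast_one, one_mul] at hcos
  have hsplit : (fun t => Real.sin (t / 2) ^ 2 * g t)
      = fun t => 2⁻¹ * g t - 2⁻¹ * (g t * Real.cos t) := by
    ext t; rw [sin_sq_half]; ring
  rw [hsplit, expCoeff_sub (hg.const_mul _) ((hg.mul_continuousOn (by fun_prop)).const_mul _),
    expCoeff_const_mul, expCoeff_const_mul, hcos]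
  push_cast
  ring

lemma one_sub_two_mul_cos_add_sq_pos {r : ℝ} (hr : |r| < 1) (t : ℝ) :
    0 < 1 - 2 * r * Real.cos t + r ^ 2 := by
  have hrc : r * Real.cos t ≤ |r| := by
    calc r * Real.cos t ≤ |r * Real.cos t| := le_abs_self _
      _ ≤ |r| := by rw [abs_mul]; exact mul_le_of_le_one_right (abs_nonneg r) (abs_cos_le_one t)
  nlinarith [sq_abs r]

lemma continuous_log_one_sub_two_mul_cos_add_sq {r : ℝ} (hr : |r| < 1) :
    Continuous fun t => Real.log (1 - 2 * r * Real.cos t + r ^ 2) :=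
  (by fun_prop : Continuous fun t => 1 - 2 * r * Real.cos t + r ^ 2).log
    fun t => (one_sub_two_mul_cos_add_sq_pos hr t).ne'

lemma norm_one_sub_mul_exp_sq (r t : ℝ) :
    ‖1 - r * Complex.exp (t * I)‖ ^ 2 = 1 - 2 * r * Real.cos t + r ^ 2 := by
  rw [Complex.sq_norm, Complex.normSq_apply]
  simp only [sub_re, sub_im, one_re, one_im, mul_re, mul_im, ofReal_re, ofReal_im,
    exp_ofReal_mul_I_re, exp_ofReal_mul_I_im]
  nlinarith [Real.sin_sq_add_cos_sq t]

lemma hasSum_log_one_sub_two_mul_cos_add_sq {r : ℝ} (hr : |r| < 1) (t : ℝ) :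
    HasSum (fun k : ℕ => -(2 * r ^ k * Real.cos (k * t) / k))
      (Real.log (1 - 2 * r * Real.cos t + r ^ 2)) := by
  set z : ℂ := r * Complex.exp (t * I)
  have hz : ‖z‖ < 1 := by simpa [z, norm_exp_ofReal_mul_I] using hr
  have hterm : ∀ k : ℕ, -(2 * r ^ k * Real.cos (k * t) / k) = -2 * (z ^ k / k).re := by
    intro k
    rw [div_natCast_re, mul_pow, ← Complex.exp_nat_mul, ← ofReal_pow,
      show (k : ℂ) * (t * I) = (k * t : ℝ) * I by push_cast; ring, re_ofReal_mul,
      exp_ofReal_mul_I_re]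
    ring
  have hsum : -2 * (-Complex.log (1 - z)).re = Real.log (1 - 2 * r * Real.cos t + r ^ 2) := by
    rw [neg_re, log_re, ← norm_one_sub_mul_exp_sq, Real.log_pow]
    push_cast
    ring
  rw [← hsum]
  exact ((hasSum_re (hasSum_taylorSeries_neg_log hz)).mul_left (-2)).congr_fun hterm

-- For `n = 0` the division by `n.natAbs = 0` makes this `0`, the correct value.
noncomputable def logCoeff (r : ℝ) (n : ℤ) : ℂ := -(2 * π) * r ^ n.natAbs / n.natAbs

lemma expCoeff_log_one_sub_two_mul_cos_add_sq {r : ℝ} (hr : |r| < 1) (n : ℤ) :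
    expCoeff (fun t => Real.log (1 - 2 * r * Real.cos t + r ^ 2)) n = logCoeff r n := by
  set F : ℕ → ℝ → ℂ := fun k t =>
    ((-(2 * r ^ k * Real.cos (k * t) / k) : ℝ) : ℂ) * Complex.exp (I * n * t)
  have hcoeff : ∀ k : ℕ, ∫ t in (0:ℝ)..2 * π, F k t = if k = n.natAbs then logCoeff r n else 0 := by
    intro k
    rcases eq_or_ne k 0 with rfl | hk
    · simp only [F, CharP.cast_eq_zero, div_zero, neg_zero, ofReal_zero, zero_mul,
        intervalIntegral.integral_zero]
      split_ifs with h
      · simp [logCoeff, Int.natAbs_eq_zero.mp h.symm]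
      · rfl
    calc ∫ t in (0:ℝ)..2 * π, F k t
        = expCoeff (fun t => -(2 * r ^ k / k) * Real.cos (k * t)) n := by
          simp only [expCoeff, F]
          congr 1 with t
          push_cast
          ring
      _ = _ := by
          rw [expCoeff_const_mul, expCoeff_cos_nat_mul hk]
          by_cases h : k = n.natAbs
          · subst h
            simp only [logCoeff, if_true, ofReal_neg, ofReal_div, ofReal_mul, ofReal_pow,
              ofReal_natCast, ofReal_ofNat]
            ring
          · simp [h, Ne.symm h]
  have hbound : ∀ k : ℕ, ∀ t : ℝ, ‖F k t‖ ≤ 2 * |r| ^ k := by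
    intro k t
    rw [norm_mul, norm_exp_I_int_mul, mul_one, norm_real, norm_neg, Real.norm_eq_abs, abs_div,
      abs_mul, abs_mul, abs_pow, Nat.abs_cast, abs_two]
    rcases eq_or_ne k 0 with rfl | hk
    · simp
    calc 2 * |r| ^ k * |Real.cos (k * t)| / k ≤ 2 * |r| ^ k * 1 / 1 := by
          gcongr
          · exact abs_cos_le_one _
          · exact_mod_cast Nat.one_le_iff_ne_zero.mpr hk
      _ = 2 * |r| ^ k := by ring
  have hsum := intervalIntegral.hasSum_integral_of_dominated_convergence
    (μ := volume) (a := 0) (b := 2 * π) (F := F)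
    (f := fun t => (Real.log (1 - 2 * r * Real.cos t + r ^ 2) : ℂ) * Complex.exp (I * n * t))
    (fun k _ => 2 * |r| ^ k) (fun k => by fun_prop) (fun k => ae_of_all _ fun t _ => hbound k t)
    (ae_of_all _ fun t _ => (summable_geometric_of_lt_one (abs_nonneg r) hr).mul_left 2)
    intervalIntegrable_const
    (ae_of_all _ fun t _ =>
      (hasSum_ofReal.mpr (hasSum_log_one_sub_two_mul_cos_add_sq hr t)).mul_right _)
  simp only [hcoeff] at hsum
  exact hsum.unique (hasSum_ite_eq _ _)

lemma abs_mul_log_le_three {x u : ℝ} (hx0 : 0 ≤ x) (hx1 : x ≤ 1) (hxu : x ≤ u) (hu : u ≤ 4) :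
    |x * Real.log u| ≤ 3 := by
  rcases hx0.eq_or_lt with rfl | hx
  · simp
  rcases le_or_gt 1 u with h1 | h1
  · rw [abs_of_nonneg (mul_nonneg hx0 (Real.log_nonneg h1))]
    nlinarith [Real.log_le_sub_one_of_pos (hx.trans_le hxu), Real.log_nonneg h1]
  · calc |x * Real.log u| = x * -Real.log u := by
          rw [abs_mul, abs_of_pos hx, abs_of_neg (Real.log_neg (hx.trans_le hxu) h1)]
      _ ≤ x * -Real.log x := by gcongr
      _ = -(Real.log x * x) := by ring
      _ ≤ |Real.log x * x| := neg_le_abs _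
      _ ≤ 3 := by linarith [Real.abs_log_mul_self_lt x hx hx1]

lemma abs_sin_sq_half_mul_log_le {r : ℝ} (hr0 : 0 ≤ r) (hr1 : r ≤ 1) (t : ℝ) :
    |Real.sin (t / 2) ^ 2 * Real.log (1 - 2 * r * Real.cos t + r ^ 2)| ≤ 3 := by
  have hc := Real.neg_one_le_cos t
  have hc' := Real.cos_le_one t
  refine abs_mul_log_le_three (sq_nonneg _) (sin_sq_le_one _) ?_ (by nlinarith)
  rw [sin_sq_half]
  nlinarith [mul_nonneg (by linarith : (0:ℝ) ≤ 1 + Real.cos t) (sq_nonneg (1 - r)),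
    mul_nonneg (by linarith : (0:ℝ) ≤ 1 - Real.cos t) (sq_nonneg r)]

lemma tendsto_sin_sq_half_mul_log (t : ℝ) :
    Tendsto (fun r => Real.sin (t / 2) ^ 2 * Real.log (1 - 2 * r * Real.cos t + r ^ 2)) (𝓝 1)
      (𝓝 (Real.sin (t / 2) ^ 2 * Real.log (4 * Real.sin (t / 2) ^ 2))) := by
  have h4 : 1 - 2 * 1 * Real.cos t + 1 ^ 2 = 4 * Real.sin (t / 2) ^ 2 := by
    rw [sin_sq_half]; ring
  rcases eq_or_ne (Real.sin (t / 2)) 0 with h | h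
  · simp [h]
  rw [← h4]
  exact (continuousAt_const.mul
    ((by fun_prop : ContinuousAt (fun r => 1 - 2 * r * Real.cos t + r ^ 2) 1).log
      (by rw [h4]; positivity))).tendsto

lemma expCoeff_sin_sq_half_mul_log_one_sub_two_mul_cos_add_sq {r : ℝ} (hr : |r| < 1) (n : ℤ) :
    expCoeff (fun t => Real.sin (t / 2) ^ 2 * Real.log (1 - 2 * r * Real.cos t + r ^ 2)) n
      = logCoeff r n / 2 - (logCoeff r (n + 1) + logCoeff r (n - 1)) / 4 := by
  rw [expCoeff_sin_sq_half_mul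
      ((continuous_log_one_sub_two_mul_cos_add_sq hr).intervalIntegrable _ _),
    expCoeff_log_one_sub_two_mul_cos_add_sq hr, expCoeff_log_one_sub_two_mul_cos_add_sq hr,
    expCoeff_log_one_sub_two_mul_cos_add_sq hr]

lemma tendsto_expCoeff_sin_sq_half_mul_log (n : ℤ) :
    Tendsto (fun r => expCoeff
        (fun t => Real.sin (t / 2) ^ 2 * Real.log (1 - 2 * r * Real.cos t + r ^ 2)) n) (𝓝[<] 1)
      (𝓝 (expCoeff (fun t => Real.sin (t / 2) ^ 2 * Real.log (4 * Real.sin (t / 2) ^ 2)) n)) := by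
  refine intervalIntegral.tendsto_integral_filter_of_dominated_convergence (fun _ => 3)
    (Eventually.of_forall fun r => by fun_prop) ?_ intervalIntegrable_const
    (ae_of_all _ fun t _ => ((continuous_ofReal.tendsto _).comp
      ((tendsto_sin_sq_half_mul_log t).mono_left nhdsWithin_le_nhds)).mul_const _)
  filter_upwards [Ioo_mem_nhdsLT zero_lt_one] with r hr
  refine ae_of_all _ fun t _ => ?_
  rw [norm_mul, norm_exp_I_int_mul, mul_one, norm_real, Real.norm_eq_abs]
  exact abs_sin_sq_half_mul_log_le hr.1.le hr.2.le t

lemma expCoeff_sin_sq_half_mul_log_four_sin_sq (n : ℤ) :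
    expCoeff (fun t => Real.sin (t / 2) ^ 2 * Real.log (4 * Real.sin (t / 2) ^ 2)) n
      = logCoeff 1 n / 2 - (logCoeff 1 (n + 1) + logCoeff 1 (n - 1)) / 4 := by
  refine tendsto_nhds_unique (tendsto_expCoeff_sin_sq_half_mul_log n) ?_
  have hlim : Tendsto (fun r => logCoeff r n / 2 - (logCoeff r (n + 1) + logCoeff r (n - 1)) / 4)
      (𝓝[<] 1) (𝓝 (logCoeff 1 n / 2 - (logCoeff 1 (n + 1) + logCoeff 1 (n - 1)) / 4)) :=
    ((by unfold logCoeff; fun_prop : Continuous fun r : ℝ =>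
      logCoeff r n / 2 - (logCoeff r (n + 1) + logCoeff r (n - 1)) / 4).tendsto 1).mono_left
      nhdsWithin_le_nhds
  refine hlim.congr' ?_
  filter_upwards [Ioo_mem_nhdsLT zero_lt_one] with r hr
  rw [expCoeff_sin_sq_half_mul_log_one_sub_two_mul_cos_add_sq
    (abs_lt.mpr ⟨by linarith [hr.1], hr.2⟩)]

theorem stmt1 (m : ℤ) :
    (1 / (2 * Real.pi) : ℂ) *
      ∫ t in (0:ℝ)..(2 * Real.pi),
        ((Real.sin (t / 2) ^ 2 * Real.log (4 * Real.sin (t / 2) ^ 2) : ℝ) : ℂ) *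
          Complex.exp (Complex.I * m * t)
    = if m = 0 then 1 / 2
      else if m = 1 ∨ m = -1 then -(3 / 8)
      else (1 / 4) * (1 / ((|m + 1| : ℤ) : ℂ) + 1 / ((|m - 1| : ℤ) : ℂ) - 2 / ((|m| : ℤ) : ℂ)) := by
  have hπ : (π : ℂ) ≠ 0 := ofReal_ne_zero.mpr pi_ne_zero
  have key : (1 / (2 * π) : ℂ) * expCoeff
      (fun t => Real.sin (t / 2) ^ 2 * Real.log (4 * Real.sin (t / 2) ^ 2)) m
      = 1 / 4 * (1 / ((|m + 1| : ℤ) : ℂ) + 1 / ((|m - 1| : ℤ) : ℂ) - 2 / ((|m| : ℤ) : ℂ)) := by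
    rw [expCoeff_sin_sq_half_mul_log_four_sin_sq]
    simp only [logCoeff, ofReal_one, one_pow, mul_one, Nat.cast_natAbs]
    field_simp
    ring
  refine key.trans ?_
  -- with `1 / 0 = 0` the generic formula also takes the right values at `m = 0, ±1`
  split_ifs with h0 h1
  · subst h0; norm_num
  · rcases h1 with rfl | rfl <;> norm_num
  · rfl
end
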